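/- Variation of the Newtonian angular momentum (Eq. AdJN): Let J(λ) := ∫ ρ(λ) v_i(λ) φ^i dV. Assume that ρ(λ) vanishes outside a fixed compact set for all λ near 0, and that differentiation under the integral sign at λ = 0 is justified by an integrable dominating bound. Then the λ-derivative of J at λ = 0 equals ∫ v_i φ^i (δρ + ∂_j(ρ ξ^j)) dV + ∫ ρ φ^i Δv_i dV + ∫ ξ^i [ φ^j ∂_j(ρ v_i) + ρ v_j ∂_i φ^j ] dV. -/

import Mathlib

noncomputable section
open MeasureTheory Filter Topology Real

abbrev E3 := EuclideanSpace ℝ (Fin 3)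

/-- Partial derivative in the `i`-th coordinate direction. -/
noncomputable def pd (i : Fin 3) (f : E3 → ℝ) (x : E3) : ℝ :=
  fderiv ℝ f x (EuclideanSpace.single i 1)

/-- Flat Laplacian on `ℝ³`. -/
noncomputable def lap (f : E3 → ℝ) (x : E3) : ℝ := ∑ i, pd i (fun y => pd i f y) x

/-- Surface integral over the sphere of radius `r` (centered at the origin) of the outward
normal component of the vector field with components `F · i`. -/
noncomputable def flux (F : E3 → Fin 3 → ℝ) (r : ℝ) : ℝ :=
  r ^ 2 * ∫ ω : Metric.sphere (0 : E3) 1,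
      (∑ i, F (r • (ω : E3)) i * (ω : E3) i) ∂((volume : Measure E3).toSphere)

/-- Eulerian variation `δF` (the `λ`-derivative at `λ = 0`) of a family of scalar fields. -/
noncomputable def dl (F : ℝ → E3 → ℝ) (x : E3) : ℝ := deriv (fun l => F l x) 0

/-- Lagrangian variation `ΔF := δF + ξ^j ∂_j F` of a family of scalar fields. -/
noncomputable def lagS (ξ : E3 → Fin 3 → ℝ) (F : ℝ → E3 → ℝ) (x : E3) : ℝ :=
  dl F x + ∑ j, ξ x j * pd j (F 0) x

/-- Lagrangian variation `Δv_i := δv_i + ξ^j ∂_j v_i + v_j ∂_i ξ^j` of the velocity. -/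
noncomputable def lagV (ξ : E3 → Fin 3 → ℝ) (v : ℝ → E3 → Fin 3 → ℝ) (i : Fin 3)
    (x : E3) : ℝ :=
  deriv (fun l => v l x i) 0 + (∑ j, ξ x j * pd j (fun y => v 0 y i) x)
    + ∑ j, v 0 x j * pd i (fun y => ξ y j) x

/-- `δρ + ∂_j(ρ ξ^j)`, the volume density of `Δ(ρ dV)`. -/
noncomputable def massVar (ξ : E3 → Fin 3 → ℝ) (ρ : ℝ → E3 → ℝ) (x : E3) : ℝ :=
  dl ρ x + ∑ j, pd j (fun y => ρ 0 y * ξ y j) x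

/-- The rotational vector field `φ(x) = (−x₂, x₁, 0)`. -/
noncomputable def phiRot (x : E3) : Fin 3 → ℝ := ![-(x 1), x 0, 0]

/-! ### Auxiliary lemmas -/

lemma pd_mul {f g : E3 → ℝ} {x : E3} (hf : DifferentiableAt ℝ f x)
    (hg : DifferentiableAt ℝ g x) (j : Fin 3) :
    pd j (fun y => f y * g y) x = pd j f x * g x + f x * pd j g x := by
  unfold pd
  rw [fderiv_fun_mul hf hg]
  simp
  ring

lemma pd_add {f g : E3 → ℝ} {x : E3} (hf : DifferentiableAt ℝ f x)
    (hg : DifferentiableAt ℝ g x) (j : Fin 3) :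
    pd j (fun y => f y + g y) x = pd j f x + pd j g x := by
  unfold pd
  rw [fderiv_fun_add hf hg]
  simp

lemma pd_sum {F : Fin 3 → E3 → ℝ} {x : E3} (hF : ∀ i, DifferentiableAt ℝ (F i) x) (j : Fin 3) :
    pd j (fun y => ∑ i, F i y) x = ∑ i, pd j (F i) x := by
  unfold pd
  rw [fderiv_fun_sum (fun i _ => hF i)]
  simp

lemma pd_coord (i k : Fin 3) (x : E3) :
    pd i (fun y : E3 => y k) x = if k = i then 1 else 0 := by
  have h : (fun y : E3 => y k) = fun y => (EuclideanSpace.proj (𝕜 := ℝ) k) y := rfl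
  unfold pd
  rw [h, ContinuousLinearMap.fderiv]
  simp [EuclideanSpace.single_apply]

lemma pd_eventually_zero {f : E3 → ℝ} {x : E3} (h : ∀ᶠ y in 𝓝 x, f y = 0) (j : Fin 3) :
    pd j f x = 0 := by
  unfold pd
  have h' : f =ᶠ[𝓝 x] (fun _ => (0:ℝ)) := h
  rw [h'.fderiv_eq]
  simp

lemma contDiff_coord (k : Fin 3) : ContDiff ℝ (⊤ : ℕ∞) (fun y : E3 => y k) :=
  (EuclideanSpace.proj (𝕜 := ℝ) k).contDiff

lemma contDiff_phi (i : Fin 3) : ContDiff ℝ (⊤ : ℕ∞) (fun y : E3 => phiRot y i) := by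
  fin_cases i <;> simp [phiRot]
  · exact (contDiff_coord 1).neg
  · exact contDiff_coord 0
  · exact contDiff_const

lemma pd_phi (i j : Fin 3) (x : E3) :
    pd i (fun y : E3 => phiRot y j) x = !![0,-1,0; 1,0,0; 0,0,0] j i := by
  fin_cases j <;> simp [phiRot]
  · have h : (fun y : E3 => -(y 1)) = fun y => -((fun z : E3 => z 1) y) := rfl
    have h2 : pd i (fun y : E3 => -(y 1)) x = -(pd i (fun y : E3 => y 1) x) := by
      unfold pd
      rw [h, fderiv_fun_neg]
      simp
    rw [h2, pd_coord]
    fin_cases i <;> simp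
  · rw [pd_coord]; fin_cases i <;> simp
  · have h2 : pd i (fun _ : E3 => (0:ℝ)) x = 0 := by unfold pd; simp
    rw [h2]; fin_cases i <;> simp

lemma deriv_slice {F : ℝ → E3 → ℝ} (hF : ContDiff ℝ (⊤ : ℕ∞) fun p : ℝ × E3 => F p.1 p.2) (x : E3) :
    HasDerivAt (fun l => F l x) (fderiv ℝ (fun p : ℝ × E3 => F p.1 p.2) (0, x) (1, 0)) 0 := by
  have h1 : HasDerivAt (fun l : ℝ => ((l : ℝ), x)) ((1:ℝ), (0:E3)) 0 :=
    (hasDerivAt_id (0:ℝ)).prodMk (hasDerivAt_const (0:ℝ) x)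
  exact ((hF.differentiable (by simp) (0, x)).hasFDerivAt).comp_hasDerivAt 0 h1

lemma cont_dl {F : ℝ → E3 → ℝ} (hF : ContDiff ℝ (⊤ : ℕ∞) fun p : ℝ × E3 => F p.1 p.2) :
    Continuous (dl F) := by
  have h : dl F = fun x => fderiv ℝ (fun p : ℝ × E3 => F p.1 p.2) (0, x) (1, 0) :=
    funext fun x => (deriv_slice hF x).deriv
  rw [h]
  exact ((contDiff_infty_iff_fderiv.mp (hF.of_le (by simp))).2.continuous.comp
    (continuous_const.prodMk continuous_id)).clm_apply continuous_const

lemma cont_pd {f : E3 → ℝ} (hf : ContDiff ℝ (⊤ : ℕ∞) f) (j : Fin 3) : Continuous (pd j f) :=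
  ((contDiff_infty_iff_fderiv.mp (hf.of_le (by simp))).2.continuous).clm_apply continuous_const

lemma integrableK {K : Set E3} (hK : IsCompact K) {f : E3 → ℝ} (hf : Continuous f)
    (h0 : ∀ x ∉ K, f x = 0) : Integrable f :=
  hf.integrable_of_hasCompactSupport (HasCompactSupport.intro hK h0)

lemma integral_pd_eq_zero {g : E3 → ℝ} (hg : ContDiff ℝ (⊤ : ℕ∞) g) (hsupp : HasCompactSupport g)
    (j : Fin 3) : ∫ x : E3, pd j g x = 0 := by
  obtain ⟨R, hR0, hRs⟩ : ∃ R, 0 < R ∧ tsupport g ⊆ Metric.ball 0 R :=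
    hsupp.isCompact.isBounded.subset_ball_lt 0 0
  set φb : ContDiffBump (0 : E3) := ⟨R, 2*R, hR0, by linarith⟩ with hφb
  have hgdiff : Differentiable ℝ g := hg.differentiable (by simp)
  have hcg : Continuous fun x => fderiv ℝ g x (EuclideanSpace.single j 1) :=
    ((contDiff_infty_iff_fderiv.mp (hg.of_le (by simp))).2.continuous).clm_apply continuous_const
  have hcsg : HasCompactSupport fun x => fderiv ℝ g x (EuclideanSpace.single j 1) :=
    hsupp.fderiv_apply ℝ _
  have hcφ : Continuous fun x => (φb : E3 → ℝ) x := φb.continuous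
  have hcφ' : Continuous fun x => fderiv ℝ (φb : E3 → ℝ) x (EuclideanSpace.single j 1) :=
    ((contDiff_infty_iff_fderiv.mp φb.contDiff).2.continuous).clm_apply continuous_const
  have h1 : Integrable (fun x => fderiv ℝ (φb : E3 → ℝ) x (EuclideanSpace.single j 1) * g x) :=
    ((hcφ'.mul hg.continuous).integrable_of_hasCompactSupport (hsupp.mul_left))
  have h2 : Integrable (fun x => (φb : E3 → ℝ) x * fderiv ℝ g x (EuclideanSpace.single j 1)) :=
    ((hcφ.mul hcg).integrable_of_hasCompactSupport (hcsg.mul_left))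
  have h3 : Integrable (fun x => (φb : E3 → ℝ) x * g x) :=
    ((hcφ.mul hg.continuous).integrable_of_hasCompactSupport (hsupp.mul_left))
  have key := integral_mul_fderiv_eq_neg_fderiv_mul_of_integrable
    (v := EuclideanSpace.single j 1) h1 h2 h3 (fun y _ => (contDiff_infty_iff_fderiv.mp φb.contDiff).1 y) (fun y _ => hgdiff y)
  have e1 : ∀ x : E3, pd j g x = (φb : E3 → ℝ) x * fderiv ℝ g x (EuclideanSpace.single j 1) := by
    intro x
    by_cases hx : x ∈ tsupport g
    · rw [φb.one_of_mem_closedBall (Metric.ball_subset_closedBall (hRs hx))]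
      simp [pd]
    · have : fderiv ℝ g x = 0 := by
        have : x ∉ tsupport (fderiv ℝ g) := fun h => hx (tsupport_fderiv_subset ℝ h)
        exact image_eq_zero_of_notMem_tsupport this
      simp [pd, this]
  have e2 : ∀ x : E3, fderiv ℝ (φb : E3 → ℝ) x (EuclideanSpace.single j 1) * g x = 0 := by
    intro x
    by_cases hx : x ∈ tsupport g
    · have hmem : Metric.ball (0:E3) R ∈ 𝓝 x := (Metric.isOpen_ball).mem_nhds (hRs hx)
      have hev : (φb : E3 → ℝ) =ᶠ[𝓝 x] fun _ => 1 := by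
        filter_upwards [hmem] with y hy
        exact φb.one_of_mem_closedBall (Metric.ball_subset_closedBall hy)
      rw [hev.fderiv_eq]
      simp
    · simp [image_eq_zero_of_notMem_tsupport hx]
  calc ∫ x : E3, pd j g x
      = ∫ x : E3, (φb : E3 → ℝ) x * fderiv ℝ g x (EuclideanSpace.single j 1) :=
        integral_congr_ae (Filter.Eventually.of_forall e1)
    _ = - ∫ x : E3, fderiv ℝ (φb : E3 → ℝ) x (EuclideanSpace.single j 1) * g x := key
    _ = 0 := by simp [e2]

/-- The vector field whose divergence accounts for the difference between the two sides. -/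
noncomputable def WW (ρ : ℝ → E3 → ℝ) (v : ℝ → E3 → Fin 3 → ℝ) (ξ : E3 → Fin 3 → ℝ)
    (j : Fin 3) (y : E3) : ℝ :=
  ρ 0 y * ξ y j * (∑ i, v 0 y i * phiRot y i)
    + (ρ 0 y * ∑ i, ξ y i * v 0 y i) * phiRot y j

noncomputable def Afun (ρ : ℝ → E3 → ℝ) (v : ℝ → E3 → Fin 3 → ℝ) (x : E3) : ℝ :=
  dl ρ x * (∑ i, v 0 x i * phiRot x i)
    + ρ 0 x * ∑ i, deriv (fun l => v l x i) 0 * phiRot x i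

noncomputable def B1f (ρ : ℝ → E3 → ℝ) (v : ℝ → E3 → Fin 3 → ℝ) (ξ : E3 → Fin 3 → ℝ)
    (x : E3) : ℝ := (∑ i, v 0 x i * phiRot x i) * massVar ξ ρ x

noncomputable def B2f (ρ : ℝ → E3 → ℝ) (v : ℝ → E3 → Fin 3 → ℝ) (ξ : E3 → Fin 3 → ℝ)
    (x : E3) : ℝ := ∑ i, ρ 0 x * phiRot x i * lagV ξ v i x

noncomputable def B3f (ρ : ℝ → E3 → ℝ) (v : ℝ → E3 → Fin 3 → ℝ) (ξ : E3 → Fin 3 → ℝ)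
    (x : E3) : ℝ :=
  ∑ i, ξ x i * ((∑ j, phiRot x j * pd j (fun y => ρ 0 y * v 0 y i) x)
    + ρ 0 x * ∑ j, v 0 x j * pd i (fun y => phiRot y j) x)

lemma pointwise_id (ρ : ℝ → E3 → ℝ) (v : ℝ → E3 → Fin 3 → ℝ) (ξ : E3 → Fin 3 → ℝ)
    (hρ0 : ContDiff ℝ (⊤ : ℕ∞) (ρ 0)) (hv0 : ∀ i, ContDiff ℝ (⊤ : ℕ∞) fun y => v 0 y i)
    (hξC : ∀ i, ContDiff ℝ (⊤ : ℕ∞) fun x => ξ x i) (x : E3) :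
    B1f ρ v ξ x + B2f ρ v ξ x + B3f ρ v ξ x
      = Afun ρ v x + ∑ j, pd j (WW ρ v ξ j) x := by
  have dρ : DifferentiableAt ℝ (ρ 0) x := hρ0.differentiable (by simp) x
  have dv : ∀ i, DifferentiableAt ℝ (fun y => v 0 y i) x :=
    fun i => (hv0 i).differentiable (by simp) x
  have dξ : ∀ i, DifferentiableAt ℝ (fun y => ξ y i) x :=
    fun i => (hξC i).differentiable (by simp) x
  have dφ : ∀ i, DifferentiableAt ℝ (fun y : E3 => phiRot y i) x :=
    fun i => (contDiff_phi i).differentiable (by simp) x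
  have dS : DifferentiableAt ℝ (fun y : E3 => ∑ i, v 0 y i * phiRot y i) x :=
    DifferentiableAt.fun_sum fun i _ => (dv i).mul (dφ i)
  have dξv : DifferentiableAt ℝ (fun y : E3 => ∑ i, ξ y i * v 0 y i) x :=
    DifferentiableAt.fun_sum fun i _ => (dξ i).mul (dv i)
  have eS : ∀ j, pd j (fun y : E3 => ∑ i, v 0 y i * phiRot y i) x
      = ∑ i, (pd j (fun y => v 0 y i) x * phiRot x i
          + v 0 x i * pd j (fun y : E3 => phiRot y i) x) := by
    intro j
    rw [pd_sum (F := fun i y => v 0 y i * phiRot y i) (fun i => (dv i).mul (dφ i)) j]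
    exact Finset.sum_congr rfl fun i _ => pd_mul (dv i) (dφ i) j
  have eξv : ∀ j, pd j (fun y : E3 => ∑ i, ξ y i * v 0 y i) x
      = ∑ i, (pd j (fun y => ξ y i) x * v 0 x i
          + ξ x i * pd j (fun y => v 0 y i) x) := by
    intro j
    rw [pd_sum (F := fun i y => ξ y i * v 0 y i) (fun i => (dξ i).mul (dv i)) j]
    exact Finset.sum_congr rfl fun i _ => pd_mul (dξ i) (dv i) j
  have em : ∀ j, pd j (fun y => ρ 0 y * ξ y j) x
      = pd j (ρ 0) x * ξ x j + ρ 0 x * pd j (fun y => ξ y j) x :=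
    fun j => pd_mul dρ (dξ j) j
  have eρv : ∀ i j, pd j (fun y => ρ 0 y * v 0 y i) x
      = pd j (ρ 0) x * v 0 x i + ρ 0 x * pd j (fun y => v 0 y i) x :=
    fun i j => pd_mul dρ (dv i) j
  have hW : ∀ j, pd j (WW ρ v ξ j) x
      = (pd j (ρ 0) x * ξ x j + ρ 0 x * pd j (fun y => ξ y j) x)
            * (∑ i, v 0 x i * phiRot x i)
          + (ρ 0 x * ξ x j) * (∑ i, (pd j (fun y => v 0 y i) x * phiRot x i
              + v 0 x i * pd j (fun y : E3 => phiRot y i) x))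
        + ((pd j (ρ 0) x * (∑ i, ξ x i * v 0 x i)
              + ρ 0 x * (∑ i, (pd j (fun y => ξ y i) x * v 0 x i
                  + ξ x i * pd j (fun y => v 0 y i) x))) * phiRot x j
          + (ρ 0 x * ∑ i, ξ x i * v 0 x i) * pd j (fun y : E3 => phiRot y j) x) := by
    intro j
    have h1 : pd j (WW ρ v ξ j) x
        = pd j (fun y => ρ 0 y * ξ y j * (∑ i, v 0 y i * phiRot y i)) x
          + pd j (fun y => (ρ 0 y * ∑ i, ξ y i * v 0 y i) * phiRot y j) x :=
      pd_add ((dρ.mul (dξ j)).mul dS) ((dρ.mul dξv).mul (dφ j)) j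
    have h2 : pd j (fun y => ρ 0 y * ξ y j * (∑ i, v 0 y i * phiRot y i)) x
        = pd j (fun y => ρ 0 y * ξ y j) x * (∑ i, v 0 x i * phiRot x i)
          + (ρ 0 x * ξ x j) * pd j (fun y : E3 => ∑ i, v 0 y i * phiRot y i) x :=
      pd_mul (dρ.mul (dξ j)) dS j
    have h3 : pd j (fun y => (ρ 0 y * ∑ i, ξ y i * v 0 y i) * phiRot y j) x
        = pd j (fun y => ρ 0 y * ∑ i, ξ y i * v 0 y i) x * phiRot x j
          + (ρ 0 x * ∑ i, ξ x i * v 0 x i) * pd j (fun y : E3 => phiRot y j) x :=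
      pd_mul (dρ.mul dξv) (dφ j) j
    have h4 : pd j (fun y => ρ 0 y * ∑ i, ξ y i * v 0 y i) x
        = pd j (ρ 0) x * (∑ i, ξ x i * v 0 x i)
          + ρ 0 x * pd j (fun y : E3 => ∑ i, ξ y i * v 0 y i) x :=
      pd_mul dρ dξv j
    rw [h1, h2, h3, h4, em j, eS j, eξv j]
  simp only [B1f, B2f, B3f, Afun, massVar, lagV]
  simp only [hW, em, eρv]
  simp only [Fin.sum_univ_three, pd_phi]
  norm_num [Matrix.cons_val_zero, Matrix.cons_val_one, Matrix.head_cons, Matrix.cons_val_two,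
    Matrix.vecTail, Matrix.vecHead]
  ring

/-- Variation of the Newtonian angular momentum (Eq. AdJN):
`δ∫ ρ v_i φ^i dV = ∫ v_i φ^i (δρ + ∂_j(ρξ^j)) dV + ∫ ρ φ^i Δv_i dV
  + ∫ ξ^i [φ^j ∂_j(ρ v_i) + ρ v_j ∂_i φ^j] dV`. -/
theorem newtonian_angular_momentum_variation
    (ρ : ℝ → E3 → ℝ) (v : ℝ → E3 → Fin 3 → ℝ) (ξ : E3 → Fin 3 → ℝ)
    (hρC : ContDiff ℝ (⊤ : ℕ∞) fun p : ℝ × E3 => ρ p.1 p.2)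
    (hvC : ∀ i, ContDiff ℝ (⊤ : ℕ∞) fun p : ℝ × E3 => v p.1 p.2 i)
    (hξC : ∀ i, ContDiff ℝ (⊤ : ℕ∞) fun x => ξ x i)
    -- ρ(λ) vanishes outside a fixed compact set for all λ near 0
    (K : Set E3) (hK : IsCompact K) (ε : ℝ) (hε : 0 < ε)
    (hsupp : ∀ l : ℝ, |l| < ε → ∀ x ∉ K, ρ l x = 0)
    -- differentiation under the integral sign at λ = 0 is justified
    (hDUI : HasDerivAt (fun l => ∫ x : E3, ρ l x * ∑ i, v l x i * phiRot x i)
      (∫ x : E3, deriv (fun l => ρ l x * ∑ i, v l x i * phiRot x i) 0) 0) :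
    deriv (fun l => ∫ x : E3, ρ l x * ∑ i, v l x i * phiRot x i) 0
      = (∫ x : E3, (∑ i, v 0 x i * phiRot x i) * massVar ξ ρ x)
        + (∫ x : E3, ∑ i, ρ 0 x * phiRot x i * lagV ξ v i x)
        + ∫ x : E3, ∑ i, ξ x i *
            ((∑ j, phiRot x j * pd j (fun y => ρ 0 y * v 0 y i) x)
              + ρ 0 x * ∑ j, v 0 x j * pd i (fun y => phiRot y j) x) := by
  -- smoothness of the time-zero slices
  have hρ0 : ContDiff ℝ (⊤ : ℕ∞) (ρ 0) :=
    hρC.comp ((contDiff_const.prodMk contDiff_id))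
  have hv0 : ∀ i, ContDiff ℝ (⊤ : ℕ∞) fun y => v 0 y i :=
    fun i => (hvC i).comp ((contDiff_const.prodMk contDiff_id))
  -- continuity of the various fields
  have cρ0 : Continuous (ρ 0) := hρ0.continuous
  have cv0 : ∀ i, Continuous fun y : E3 => v 0 y i := fun i => (hv0 i).continuous
  have cξ : ∀ i, Continuous fun y : E3 => ξ y i := fun i => (hξC i).continuous
  have cφ : ∀ i, Continuous fun y : E3 => phiRot y i := fun i => (contDiff_phi i).continuous
  have cdl : Continuous (dl ρ) := cont_dl hρC
  have cdv : ∀ i, Continuous fun x : E3 => deriv (fun l => v l x i) 0 :=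
    fun i => cont_dl (F := fun l y => v l y i) (hvC i)
  have cS : Continuous fun x : E3 => ∑ i, v 0 x i * phiRot x i :=
    continuous_finset_sum _ fun i _ => (cv0 i).mul (cφ i)
  have cA : Continuous (Afun ρ v) := by
    unfold Afun
    exact (cdl.mul cS).add
      (cρ0.mul (continuous_finset_sum _ fun i _ => (cdv i).mul (cφ i)))
  have cB1 : Continuous (B1f ρ v ξ) := by
    unfold B1f massVar
    exact cS.mul (cdl.add (continuous_finset_sum _ fun j _ =>
      cont_pd (hρ0.mul (hξC j)) j))
  have cB2 : Continuous (B2f ρ v ξ) := by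
    unfold B2f lagV
    exact continuous_finset_sum _ fun i _ => (cρ0.mul (cφ i)).mul
      (((cdv i).add (continuous_finset_sum _ fun j _ => (cξ j).mul (cont_pd (hv0 i) j))).add
        (continuous_finset_sum _ fun j _ => (cv0 j).mul (cont_pd (hξC j) i)))
  have cB3 : Continuous (B3f ρ v ξ) := by
    unfold B3f
    exact continuous_finset_sum _ fun i _ => (cξ i).mul
      (((continuous_finset_sum _ fun j _ => (cφ j).mul (cont_pd (hρ0.mul (hv0 i)) j))).add
        (cρ0.mul (continuous_finset_sum _ fun j _ => (cv0 j).mul (cont_pd (contDiff_phi j) i))))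
  -- smoothness and compact support of W
  have hWsm : ∀ j, ContDiff ℝ (⊤ : ℕ∞) (WW ρ v ξ j) := by
    intro j
    unfold WW
    exact ((hρ0.mul (hξC j)).mul (ContDiff.sum fun i _ => (hv0 i).mul (contDiff_phi i))).add
      ((hρ0.mul (ContDiff.sum fun i _ => (hξC i).mul (hv0 i))).mul (contDiff_phi j))
  -- vanishing outside K
  have hρ0K : ∀ x ∉ K, ρ 0 x = 0 := fun x hx => hsupp 0 (by simpa using hε) x hx
  have hopen : IsOpen Kᶜ := hK.isClosed.isOpen_compl
  have hevρ : ∀ x ∉ K, ∀ᶠ y in 𝓝 x, ρ 0 y = 0 := by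
    intro x hx
    filter_upwards [hopen.mem_nhds hx] with y hy using hρ0K y hy
  have hdlK : ∀ x ∉ K, dl ρ x = 0 := by
    intro x hx
    have hl : ∀ᶠ l in 𝓝 (0:ℝ), ρ l x = 0 := by
      have h1 : ∀ᶠ l in 𝓝 (0:ℝ), |l - 0| < ε := eventually_abs_sub_lt 0 hε
      filter_upwards [h1] with l hl
      exact hsupp l (by simpa using hl) x hx
    have h' : (fun l => ρ l x) =ᶠ[𝓝 (0:ℝ)] fun _ => 0 := hl
    unfold dl
    rw [h'.deriv_eq]
    simp
  have hWK : ∀ j, ∀ x ∉ K, WW ρ v ξ j x = 0 := by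
    intro j x hx
    unfold WW
    rw [hρ0K x hx]
    ring
  have hWcs : ∀ j, HasCompactSupport (WW ρ v ξ j) :=
    fun j => HasCompactSupport.intro hK (hWK j)
  have zA : ∀ x ∉ K, Afun ρ v x = 0 := by
    intro x hx
    unfold Afun
    rw [hρ0K x hx, hdlK x hx]
    ring
  have zB1 : ∀ x ∉ K, B1f ρ v ξ x = 0 := by
    intro x hx
    unfold B1f massVar
    rw [hdlK x hx]
    have : ∀ j : Fin 3, pd j (fun y => ρ 0 y * ξ y j) x = 0 := by
      intro j
      apply pd_eventually_zero
      filter_upwards [hevρ x hx] with y hy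
      rw [hy]; ring
    simp [this]
  have zB2 : ∀ x ∉ K, B2f ρ v ξ x = 0 := by
    intro x hx
    unfold B2f
    simp [hρ0K x hx]
  have zB3 : ∀ x ∉ K, B3f ρ v ξ x = 0 := by
    intro x hx
    have h1 : ∀ i j : Fin 3, pd j (fun y => ρ 0 y * v 0 y i) x = 0 := by
      intro i j
      apply pd_eventually_zero
      filter_upwards [hevρ x hx] with y hy
      rw [hy]; ring
    unfold B3f
    simp [hρ0K x hx, h1]
  -- integrability
  have iA : Integrable (Afun ρ v) := integrableK hK cA zA
  have iB1 : Integrable (B1f ρ v ξ) := integrableK hK cB1 zB1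
  have iB2 : Integrable (B2f ρ v ξ) := integrableK hK cB2 zB2
  have iB3 : Integrable (B3f ρ v ξ) := integrableK hK cB3 zB3
  have iPDj : ∀ j, Integrable (fun x => pd j (WW ρ v ξ j) x) := by
    intro j
    refine (cont_pd (hWsm j) j).integrable_of_hasCompactSupport ?_
    exact (hWcs j).fderiv_apply ℝ _
  have iPD : Integrable (fun x : E3 => ∑ j, pd j (WW ρ v ξ j) x) :=
    integrable_finset_sum _ fun j _ => iPDj j
  -- pointwise derivative of the integrand
  have hptA : ∀ x : E3, deriv (fun l => ρ l x * ∑ i, v l x i * phiRot x i) 0 = Afun ρ v x := by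
    intro x
    have hρx : HasDerivAt (fun l => ρ l x) (dl ρ x) 0 := by
      have h := deriv_slice hρC x
      unfold dl
      rw [h.deriv]
      exact h
    have hvx : ∀ i, HasDerivAt (fun l => v l x i) (deriv (fun l => v l x i) 0) 0 := by
      intro i
      have h := deriv_slice (F := fun l y => v l y i) (hvC i) x
      exact h.differentiableAt.hasDerivAt
    have hsum : HasDerivAt (fun l => ∑ i, v l x i * phiRot x i)
        (∑ i, deriv (fun l => v l x i) 0 * phiRot x i) 0 :=
      HasDerivAt.fun_sum fun i _ => (hvx i).mul_const _
    exact (hρx.mul hsum).deriv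
  -- put everything together
  have key : (∫ x : E3, B1f ρ v ξ x) + (∫ x : E3, B2f ρ v ξ x) + (∫ x : E3, B3f ρ v ξ x)
      = ∫ x : E3, Afun ρ v x := by
    calc (∫ x : E3, B1f ρ v ξ x) + (∫ x : E3, B2f ρ v ξ x) + (∫ x : E3, B3f ρ v ξ x)
        = ∫ x : E3, (B1f ρ v ξ x + B2f ρ v ξ x + B3f ρ v ξ x) := by
          have e12 : ∫ x : E3, (B1f ρ v ξ x + B2f ρ v ξ x)
              = (∫ x : E3, B1f ρ v ξ x) + ∫ x : E3, B2f ρ v ξ x := integral_add iB1 iB2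
          have e123 : ∫ x : E3, (B1f ρ v ξ x + B2f ρ v ξ x + B3f ρ v ξ x)
              = (∫ x : E3, (B1f ρ v ξ x + B2f ρ v ξ x)) + ∫ x : E3, B3f ρ v ξ x :=
            integral_add (iB1.add iB2) iB3
          rw [e123, e12]
      _ = ∫ x : E3, (Afun ρ v x + ∑ j, pd j (WW ρ v ξ j) x) :=
          integral_congr_ae (Filter.Eventually.of_forall fun x =>
            pointwise_id ρ v ξ hρ0 hv0 hξC x)
      _ = (∫ x : E3, Afun ρ v x) + ∫ x : E3, ∑ j, pd j (WW ρ v ξ j) x := by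
          have : ∫ x : E3, (Afun ρ v x + ∑ j, pd j (WW ρ v ξ j) x)
              = (∫ x : E3, Afun ρ v x) + ∫ x : E3, ∑ j, pd j (WW ρ v ξ j) x :=
            integral_add iA iPD
          exact this
      _ = (∫ x : E3, Afun ρ v x) + ∑ j, ∫ x : E3, pd j (WW ρ v ξ j) x := by
          rw [integral_finset_sum _ fun j _ => iPDj j]
      _ = ∫ x : E3, Afun ρ v x := by
          rw [Finset.sum_eq_zero fun j _ => integral_pd_eq_zero (hWsm j) (hWcs j) j]
          ring
  calc deriv (fun l => ∫ x : E3, ρ l x * ∑ i, v l x i * phiRot x i) 0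
      = ∫ x : E3, deriv (fun l => ρ l x * ∑ i, v l x i * phiRot x i) 0 := hDUI.deriv
    _ = ∫ x : E3, Afun ρ v x := integral_congr_ae (Filter.Eventually.of_forall hptA)
    _ = (∫ x : E3, B1f ρ v ξ x) + (∫ x : E3, B2f ρ v ξ x) + (∫ x : E3, B3f ρ v ξ x) := key.symm
    _ = _ := rfl
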